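/- Let f be a real polynomial of degree n with only real roots, let x_{n-1}, x_{n-2} be roots of f^{(n-1)}, f^{(n-2)} respectively, let r be the maximal multiplicity of a root of f, and let m ∈ {r, …, n−2}. Define D^{(m)} = max over roots ξ of f^{(m)} of |ξ − x_{n-1}|. Then D^{(m)} ≥ sqrt(n − m − 1) · |x_{n-1} − x_{n-2}|. Moreover, if x_{n-1} is itself a root of f^{(m)}, then D^{(m)} ≥ sqrt(n − m) · |x_{n-1} − x_{n-2}|. -/

import Mathlib

/-!
Let `p = f^{(m)}`, of degree `k = n - m`; by Rolle's theorem it still has `k` real roots `ξᵢ`.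
The root `x_{n-1}` of the linear polynomial `p^{(k-1)}` is the mean of the `ξᵢ`, and Vieta's
formulas applied to the quadratic `p^{(k-2)}` turn this into
`∑ (ξᵢ - x_{n-1})² = k (k - 1) (x_{n-1} - x_{n-2})²`.
Each of the `k` terms is at most `(D^{(m)})²`, and one of them vanishes when `x_{n-1}` is a root
of `p`; dividing by `k`, resp. `k - 1`, gives the two bounds.
-/

open Polynomial Nat

namespace Multiset

theorem esymm_one {R : Type*} [CommSemiring R] (s : Multiset R) : s.esymm 1 = s.sum := by
  simp [esymm, powersetCard_one]

theorem esymm_cons_add_one {R : Type*} [CommSemiring R] (a : R) (s : Multiset R) (k : ℕ) :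
    (a ::ₘ s).esymm (k + 1) = s.esymm (k + 1) + a * s.esymm k := by
  simp only [esymm, powersetCard_cons, map_add, sum_add, map_map, Function.comp_def, prod_cons,
    sum_map_mul_left]

theorem sum_map_sub_sq {R : Type*} [CommRing R] (s : Multiset R) (c : R) :
    (s.map fun x => (x - c) ^ 2).sum
      = s.sum ^ 2 - 2 * s.esymm 2 - 2 * c * s.sum + s.card * c ^ 2 := by
  induction s using Multiset.induction with
  | empty => simp [esymm, powersetCard_zero_right]
  | cons a s ih =>
    rw [map_cons, sum_cons, ih, esymm_cons_add_one, esymm_one, sum_cons, card_cons]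
    push_cast
    ring

section LinearOrder

variable {R : Type*} [CommRing R] [LinearOrder R] [IsStrictOrderedRing R]
  {s : Multiset R} {c D : R}

theorem sum_map_sub_sq_le_card_mul (h : ∀ x ∈ s, |x - c| ≤ D) :
    (s.map fun x => (x - c) ^ 2).sum ≤ s.card * D ^ 2 := by
  rw [← card_map (fun x => (x - c) ^ 2), ← nsmul_eq_mul]
  refine sum_le_card_nsmul _ _ fun y hy => ?_
  obtain ⟨x, hx, rfl⟩ := mem_map.1 hy
  exact sq_le_sq' (abs_le.1 (h x hx)).1 (abs_le.1 (h x hx)).2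

theorem sum_map_sub_sq_le_of_mem (hc : c ∈ s) (h : ∀ x ∈ s, |x - c| ≤ D) :
    (s.map fun x => (x - c) ^ 2).sum ≤ (s.card - 1) * D ^ 2 := by
  rw [← cons_erase hc, map_cons, sum_cons, sub_self, card_cons]
  push_cast
  simpa using sum_map_sub_sq_le_card_mul fun x hx => h x (mem_of_mem_erase hx)

end LinearOrder

end Multiset

namespace Polynomial

section CommRing

variable {R : Type*} [CommRing R]

theorem eval_iterate_derivative_of_natDegree_le_add_one {p : R[X]} {j : ℕ}
    (hp : p.natDegree ≤ j + 1) (x : R) :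
    (derivative^[j] p).eval x = j ! * ((j + 1) * p.coeff (j + 1) * x + p.coeff j) := by
  have h1 : (j + 1).descFactorial j = (j + 1) * j ! := by
    simpa [Nat.factorial_succ] using Nat.factorial_mul_descFactorial (show j ≤ j + 1 by omega)
  rw [eval_eq_sum_range' (n := 2) (by have := natDegree_iterate_derivative p j; omega)]
  simp only [Finset.sum_range_succ, Finset.sum_range_zero, coeff_iterate_derivative, nsmul_eq_mul,
    zero_add, add_comm 1 j, h1, Nat.descFactorial_self]
  push_cast
  ring

theorem two_mul_eval_iterate_derivative_of_natDegree_le_add_two {p : R[X]} {j : ℕ}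
    (hp : p.natDegree ≤ j + 2) (x : R) :
    2 * (derivative^[j] p).eval x = j ! * ((j + 2) * (j + 1) * p.coeff (j + 2) * x ^ 2
      + 2 * (j + 1) * p.coeff (j + 1) * x + 2 * p.coeff j) := by
  have h1 : (j + 1).descFactorial j = (j + 1) * j ! := by
    simpa [Nat.factorial_succ] using Nat.factorial_mul_descFactorial (show j ≤ j + 1 by omega)
  have h2 : 2 * ((j + 2).descFactorial j : R) = (j + 2) * (j + 1) * j ! := by
    have h := Nat.factorial_mul_descFactorial (show j ≤ j + 2 by omega)
    rw [show j + 2 - j = 2 by omega] at h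
    simp only [Nat.factorial_succ] at h
    have hR := congrArg (Nat.cast : ℕ → R) h
    push_cast at hR
    linear_combination hR
  rw [eval_eq_sum_range' (n := 3) (by have := natDegree_iterate_derivative p j; omega)]
  simp only [Finset.sum_range_succ, Finset.sum_range_zero, coeff_iterate_derivative, nsmul_eq_mul,
    zero_add, add_comm 1 j, add_comm 2 j, h1, Nat.descFactorial_self]
  push_cast
  linear_combination (p.coeff (j + 2) * x ^ 2) * h2

variable [IsDomain R] [CharZero R] {p : R[X]} {j : ℕ}

theorem sum_roots_eq_of_eval_iterate_derivative (hdeg : p.natDegree = j + 1)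
    (hroots : p.roots.card = j + 1) {μ : R} (hμ : (derivative^[j] p).eval μ = 0) :
    p.roots.sum = (j + 1) * μ := by
  have hlead : p.leadingCoeff ≠ 0 := by
    rw [Ne, leadingCoeff_eq_zero]; rintro rfl; simp at hdeg
  have hvieta := coeff_eq_esymm_roots_of_card (hroots.trans hdeg.symm) (k := j) (by omega)
  rw [hdeg, show j + 1 - j = 1 by omega, Multiset.esymm_one] at hvieta
  rw [eval_iterate_derivative_of_natDegree_le_add_one hdeg.le, hvieta, ← hdeg, ← leadingCoeff]
    at hμ
  apply mul_left_cancel₀ (mul_ne_zero (Nat.cast_ne_zero.2 j.factorial_ne_zero) hlead)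
  linear_combination -hμ

theorem sum_roots_sub_sq_eq (hdeg : p.natDegree = j + 2) (hroots : p.roots.card = j + 2)
    {μ y : R} (hμ : (derivative^[j + 1] p).eval μ = 0) (hy : (derivative^[j] p).eval y = 0) :
    (p.roots.map fun ξ => (ξ - μ) ^ 2).sum = (j + 2) * (j + 1) * (μ - y) ^ 2 := by
  have hlead : p.leadingCoeff ≠ 0 := by
    rw [Ne, leadingCoeff_eq_zero]; rintro rfl; simp at hdeg
  have hsum := sum_roots_eq_of_eval_iterate_derivative hdeg hroots hμ
  have hcard : p.roots.card = p.natDegree := hroots.trans hdeg.symm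
  have hv1 := coeff_eq_esymm_roots_of_card hcard (k := j + 1) (by omega)
  have hv2 := coeff_eq_esymm_roots_of_card hcard (k := j) (by omega)
  rw [hdeg, show j + 2 - (j + 1) = 1 by omega, Multiset.esymm_one] at hv1
  rw [hdeg, show j + 2 - j = 2 by omega] at hv2
  have hq := two_mul_eval_iterate_derivative_of_natDegree_le_add_two hdeg.le y
  rw [hy, hv1, hv2, ← hdeg, ← leadingCoeff] at hq
  have hquad :
      (j + 2) * (j + 1) * y ^ 2 - 2 * (j + 1) * p.roots.sum * y + 2 * p.roots.esymm 2 = 0 := by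
    apply mul_left_cancel₀ (mul_ne_zero (Nat.cast_ne_zero.2 j.factorial_ne_zero) hlead)
    linear_combination -hq
  rw [Multiset.sum_map_sub_sq, hroots]
  push_cast at hsum ⊢
  linear_combination (p.roots.sum + (j + 2) * μ - 2 * μ - 2 * (j + 1) * y) * hsum - hquad

end CommRing

theorem card_roots_sub_le_card_roots_iterate_derivative (p : ℝ[X]) (k : ℕ) :
    p.roots.card - k ≤ (derivative^[k] p).roots.card := by
  induction k with
  | zero => simp
  | succ k ih =>
    have := card_roots_le_derivative (derivative^[k] p)
    rw [Function.iterate_succ_apply']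
    omega

theorem natDegree_iterate_derivative_of_card_roots {p : ℝ[X]}
    (hp : p.roots.card = p.natDegree) (k : ℕ) :
    (derivative^[k] p).natDegree = p.natDegree - k := by
  have := card_roots' (derivative^[k] p)
  have := natDegree_iterate_derivative p k
  have := card_roots_sub_le_card_roots_iterate_derivative p k
  omega

theorem card_roots_iterate_derivative_of_card_roots {p : ℝ[X]}
    (hp : p.roots.card = p.natDegree) (k : ℕ) :
    (derivative^[k] p).roots.card = p.natDegree - k := by
  have := card_roots' (derivative^[k] p)
  have := natDegree_iterate_derivative p k
  have := card_roots_sub_le_card_roots_iterate_derivative p k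
  omega

end Polynomial

theorem Real.sqrt_mul_abs_le_of_mul_sq_le {a x D : ℝ} (hD : 0 ≤ D) (h : a * x ^ 2 ≤ D ^ 2) :
    √a * |x| ≤ D := by
  rw [← Real.sqrt_sq_eq_abs, ← Real.sqrt_mul' a (sq_nonneg x), ← Real.sqrt_sq hD]
  exact Real.sqrt_le_sqrt h

theorem stmt_14_general (n m : ℕ) (hn : 2 ≤ n) (f : ℝ[X]) (hdeg : f.natDegree = n)
    (hreal : f.roots.card = n)
    (hm2 : m ≤ n - 2)
    (xn1 xn2 : ℝ)
    (hxn1 : (derivative^[n - 1] f).eval xn1 = 0)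
    (hxn2 : (derivative^[n - 2] f).eval xn2 = 0)
    (Dm : ℝ)
    (hDm : ∀ ξ : ℝ, (derivative^[m] f).eval ξ = 0 → |ξ - xn1| ≤ Dm) :
    Real.sqrt ((n : ℝ) - m - 1) * |xn1 - xn2| ≤ Dm ∧
      ((derivative^[m] f).eval xn1 = 0 →
        Real.sqrt ((n : ℝ) - m) * |xn1 - xn2| ≤ Dm) := by
  obtain ⟨j, rfl⟩ : ∃ j, n = m + j + 2 := ⟨n - m - 2, by omega⟩
  have hsplit : f.roots.card = f.natDegree := hreal.trans hdeg.symm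
  have hpdeg : (derivative^[m] f).natDegree = j + 2 := by
    rw [natDegree_iterate_derivative_of_card_roots hsplit, hdeg]; omega
  have hproots : (derivative^[m] f).roots.card = j + 2 := by
    rw [card_roots_iterate_derivative_of_card_roots hsplit, hdeg]; omega
  rw [show m + j + 2 - 1 = j + 1 + m by omega, Function.iterate_add_apply] at hxn1
  rw [show m + j + 2 - 2 = j + m by omega, Function.iterate_add_apply] at hxn2
  set p := derivative^[m] f
  have hS := sum_roots_sub_sq_eq hpdeg hproots hxn1 hxn2
  have hbound : ∀ ξ ∈ p.roots, |ξ - xn1| ≤ Dm := fun ξ hξ => hDm ξ (isRoot_of_mem_roots hξ)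
  have hD : 0 ≤ Dm := by
    obtain ⟨ξ, hξ⟩ := Multiset.card_pos_iff_exists_mem.1 (by omega : 0 < p.roots.card)
    exact (abs_nonneg _).trans (hbound ξ hξ)
  refine ⟨Real.sqrt_mul_abs_le_of_mul_sq_le hD ?_,
    fun hroot => Real.sqrt_mul_abs_le_of_mul_sq_le hD ?_⟩
  · rw [show ((m + j + 2 : ℕ) : ℝ) - m - 1 = j + 1 by push_cast; ring]
    refine le_of_mul_le_mul_left ?_ (by positivity : (0 : ℝ) < j + 2)
    simpa [hS, hproots, mul_assoc] using Multiset.sum_map_sub_sq_le_card_mul hbound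
  · have hp0 : p ≠ 0 := fun h => by simp [h] at hpdeg
    rw [show ((m + j + 2 : ℕ) : ℝ) - m = j + 2 by push_cast; ring]
    refine le_of_mul_le_mul_left ?_ (by positivity : (0 : ℝ) < j + 1)
    have := Multiset.sum_map_sub_sq_le_of_mem (mem_roots'.2 ⟨hp0, hroot⟩) hbound
    rw [hS, hproots] at this
    push_cast at this
    linear_combination this

theorem stmt_14 (n r m : ℕ) (hn : 2 ≤ n) (f : ℝ[X]) (hdeg : f.natDegree = n)
    (hreal : f.roots.card = n)
    (hr : ∀ x ∈ f.roots.toFinset, f.rootMultiplicity x ≤ r)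
    (hrex : ∃ x ∈ f.roots.toFinset, f.rootMultiplicity x = r)
    (hm1 : r ≤ m) (hm2 : m ≤ n - 2)
    (xn1 xn2 : ℝ)
    (hxn1 : (derivative^[n - 1] f).eval xn1 = 0)
    (hxn2 : (derivative^[n - 2] f).eval xn2 = 0)
    (Dm : ℝ)
    (hDm : ∀ ξ : ℝ, (derivative^[m] f).eval ξ = 0 → |ξ - xn1| ≤ Dm)
    (hDmex : ∃ ξ : ℝ, (derivative^[m] f).eval ξ = 0 ∧ |ξ - xn1| = Dm) :
    Real.sqrt ((n : ℝ) - m - 1) * |xn1 - xn2| ≤ Dm ∧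
      ((derivative^[m] f).eval xn1 = 0 →
        Real.sqrt ((n : ℝ) - m) * |xn1 - xn2| ≤ Dm) :=
  stmt_14_general n m hn f hdeg hreal hm2 xn1 xn2 hxn1 hxn2 Dm hDm
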